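/- arXiv:1010.2712 — 3 statements merged into one kernel-verified Lean document; each statement's English description precedes it below -/
import Mathlib

section
/- Let n ≥ 3 be an integer. There exist half-integers t1, t2, t3 ∈ (1/2)ℤ with t1·t2·t3 ≠ 0 satisfying s(t1)·t1^n = s(t2)·t2^n + s(t3)·t3^n if and only if there exist positive integers a, b, c with a^n + b^n = c^n. -/
/-!
Writing each half-integer as `tᵢ = mᵢ / 2` and clearing the factor `2 ^ n` turns the equation
into `ε₁ m₁ ^ n = ε₂ m₂ ^ n + ε₃ m₃ ^ n` with nonzero integers `mᵢ` and signs `εᵢ = ±1`.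
Whenever `x = y + z` in `ℤ`, one of `|x|, |y|, |z|` is the sum of the other two, and here
`|εᵢ mᵢ ^ n| = |mᵢ| ^ n`, so the `|mᵢ|` form a Fermat triple after reordering.
Conversely, a Fermat triple consists of integers, whose sign is `1`.
-/

/-- A rational number `t` is a half-integer when `2 * t` is an integer. -/
def IsHalfInteger (t : ℚ) : Prop := ∃ m : ℤ, (m : ℚ) = 2 * t

open Classical in
/-- The sign `s(t)` of a half-integer: `1` if `t` is an integer and `-1`
if `t` is a non-integer half-integer. -/
noncomputable def halfIntSign (t : ℚ) : ℚ :=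
  if ∃ m : ℤ, (m : ℚ) = t then 1 else -1

lemma halfIntSign_eq_intCast (t : ℚ) : ∃ ε : ℤ, ε.natAbs = 1 ∧ halfIntSign t = ε := by
  unfold halfIntSign
  split
  · exact ⟨1, rfl, by simp⟩
  · exact ⟨-1, rfl, by simp⟩

lemma halfIntSign_natCast (k : ℕ) : halfIntSign k = 1 := if_pos ⟨k, rfl⟩

lemma isHalfInteger_natCast (k : ℕ) : IsHalfInteger k := ⟨2 * k, by push_cast; ring⟩

lemma IsHalfInteger.exists_eq_div_two {t : ℚ} (ht : IsHalfInteger t) : ∃ m : ℤ, t = m / 2 := by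
  obtain ⟨m, hm⟩ := ht
  exact ⟨m, by rw [hm]; ring⟩

lemma Int.natAbs_eq_add_cases {x y z : ℤ} (h : x = y + z) :
    x.natAbs = y.natAbs + z.natAbs ∨ y.natAbs = x.natAbs + z.natAbs ∨
      z.natAbs = x.natAbs + y.natAbs := by
  omega

lemma Int.natAbs_mul_pow_of_natAbs_eq_one {ε : ℤ} (hε : ε.natAbs = 1) (m : ℤ) (n : ℕ) :
    (ε * m ^ n).natAbs = m.natAbs ^ n := by
  rw [Int.natAbs_mul, Int.natAbs_pow, hε, one_mul]

lemma exists_fermat_triple_of_signed_eq {n : ℕ} {ε₁ ε₂ ε₃ m₁ m₂ m₃ : ℤ}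
    (hε₁ : ε₁.natAbs = 1) (hε₂ : ε₂.natAbs = 1) (hε₃ : ε₃.natAbs = 1)
    (hm₁ : m₁ ≠ 0) (hm₂ : m₂ ≠ 0) (hm₃ : m₃ ≠ 0)
    (h : ε₁ * m₁ ^ n = ε₂ * m₂ ^ n + ε₃ * m₃ ^ n) :
    ∃ a b c : ℕ, 0 < a ∧ 0 < b ∧ 0 < c ∧ a ^ n + b ^ n = c ^ n := by
  have hp₁ := Int.natAbs_pos.mpr hm₁
  have hp₂ := Int.natAbs_pos.mpr hm₂
  have hp₃ := Int.natAbs_pos.mpr hm₃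
  rcases Int.natAbs_eq_add_cases h with h' | h' | h' <;>
    simp only [Int.natAbs_mul_pow_of_natAbs_eq_one hε₁, Int.natAbs_mul_pow_of_natAbs_eq_one hε₂,
      Int.natAbs_mul_pow_of_natAbs_eq_one hε₃] at h'
  · exact ⟨_, _, _, hp₂, hp₃, hp₁, h'.symm⟩
  · exact ⟨_, _, _, hp₁, hp₃, hp₂, h'.symm⟩
  · exact ⟨_, _, _, hp₁, hp₂, hp₃, h'.symm⟩

theorem halfinteger_fermat_iff_integer_fermat :
    ∀ n : ℕ, 3 ≤ n →
      ((∃ t1 t2 t3 : ℚ, IsHalfInteger t1 ∧ IsHalfInteger t2 ∧ IsHalfInteger t3 ∧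
          t1 * t2 * t3 ≠ 0 ∧
          halfIntSign t1 * t1 ^ n = halfIntSign t2 * t2 ^ n + halfIntSign t3 * t3 ^ n)
        ↔ (∃ a b c : ℕ, 0 < a ∧ 0 < b ∧ 0 < c ∧ a ^ n + b ^ n = c ^ n)) := by
  intro n _
  constructor
  · rintro ⟨t₁, t₂, t₃, h₁, h₂, h₃, hne, h⟩
    obtain ⟨ε₁, hε₁, hs₁⟩ := halfIntSign_eq_intCast t₁
    obtain ⟨ε₂, hε₂, hs₂⟩ := halfIntSign_eq_intCast t₂
    obtain ⟨ε₃, hε₃, hs₃⟩ := halfIntSign_eq_intCast t₃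
    obtain ⟨m₁, rfl⟩ := h₁.exists_eq_div_two
    obtain ⟨m₂, rfl⟩ := h₂.exists_eq_div_two
    obtain ⟨m₃, rfl⟩ := h₃.exists_eq_div_two
    obtain ⟨⟨hm₁, hm₂⟩, hm₃⟩ : (m₁ ≠ 0 ∧ m₂ ≠ 0) ∧ m₃ ≠ 0 := by simpa using hne
    refine exists_fermat_triple_of_signed_eq hε₁ hε₂ hε₃ hm₁ hm₂ hm₃ ?_
    have hscaled : (ε₁ : ℚ) * m₁ ^ n = ε₂ * m₂ ^ n + ε₃ * m₃ ^ n := by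
      rw [hs₁, hs₂, hs₃, div_pow, div_pow, div_pow] at h
      field_simp at h
      exact h
    exact_mod_cast hscaled
  · rintro ⟨a, b, c, ha, hb, hc, habc⟩
    refine ⟨c, a, b, isHalfInteger_natCast c, isHalfInteger_natCast a, isHalfInteger_natCast b,
      by positivity, ?_⟩
    simp only [halfIntSign_natCast, one_mul]
    exact_mod_cast habc.symm
end

section
/- The exponential map of the quaternions is surjective onto the nonzero quaternions: for every quaternion q ≠ 0 there exists a quaternion p with exp(p) = q. -/
/-!
A quaternion `q` lies in the image of an `ℝ`-algebra embedding `ℂ → ℍ` sending `I` to a unit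
imaginary quaternion `u` (so `u * u = -1`), namely as the image of `q.re + ‖q.im‖ I`.
Such an embedding is continuous and hence commutes with `exp`, so `q` is the image of
`exp (log (q.re + ‖q.im‖ I))`.
-/

open Quaternion

theorem Complex.exists_exp_eq_algHom_apply {A : Type*} [NormedRing A] [NormedAlgebra ℝ A]
    (φ : ℂ →ₐ[ℝ] A) {z : ℂ} (hz : z ≠ 0) : ∃ p : A, NormedSpace.exp p = φ z := by
  let _ : Algebra ℚ A := Algebra.compHom A (algebraMap ℚ ℝ)
  have hφ : Continuous φ := φ.toLinearMap.continuous_of_finiteDimensional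
  refine ⟨φ (Complex.log z), ?_⟩
  rw [← NormedSpace.map_exp φ hφ, ← Complex.exp_eq_exp_ℂ, Complex.exp_log hz]

theorem Quaternion.exists_mul_self_eq_neg_one_and_norm_smul_eq_im (q : ℍ[ℝ]) :
    ∃ u : ℍ[ℝ], u * u = -1 ∧ ‖q.im‖ • u = q.im := by
  by_cases h : q.im = 0
  · refine ⟨Complex.I, ?_, by simp [h]⟩
    rw [← coeComplex_mul, Complex.I_mul_I]
    ext <;> simp
  · have hn : ‖q.im‖ ≠ 0 := norm_ne_zero_iff.2 h
    refine ⟨‖q.im‖⁻¹ • q.im, ?_, smul_inv_smul₀ hn _⟩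
    rw [smul_mul_smul_comm, ← pow_two q.im, sq_eq_neg_normSq.2 q.re_im, normSq_eq_norm_mul_self,
      smul_neg, ← coe_smul, smul_eq_mul]
    field_simp
    simp

theorem quaternion_exp_surjective_onto_nonzero (q : ℍ[ℝ]) (hq : q ≠ 0) :
    ∃ p : ℍ[ℝ], NormedSpace.exp p = q := by
  obtain ⟨u, hu, hqu⟩ := q.exists_mul_self_eq_neg_one_and_norm_smul_eq_im
  have hz : (⟨q.re, ‖q.im‖⟩ : ℂ) ≠ 0 := by
    intro h
    rw [Complex.ext_iff] at h
    simp only [Complex.zero_re, Complex.zero_im, norm_eq_zero] at h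
    exact hq (by rw [← q.re_add_im, h.1, h.2]; simp)
  obtain ⟨p, hp⟩ := Complex.exists_exp_eq_algHom_apply (Complex.liftAux u hu) hz
  refine ⟨p, hp.trans ?_⟩
  rw [Complex.liftAux_apply, hqu]
  exact q.re_add_im
end

section
/- Let n ≥ 3 be an integer. If t1, t2, t3 are half-integers with t1·t2·t3 ≠ 0 satisfying s(t1)·t1^n = s(t2)·t2^n + s(t3)·t3^n, then max(|t1|, |t2|, |t3|) ≥ 3. -/
lemma hf_grow (a b c N : ℕ) (ha : 0 < a) (hb : b ≤ a) (hc : c ≤ a)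
    (hbase : b ^ N + c ^ N < a ^ N) : ∀ n, N ≤ n → b ^ n + c ^ n < a ^ n := by
  intro n hn
  induction n, hn using Nat.le_induction with
  | base => exact hbase
  | succ n hn ih =>
    calc b ^ (n + 1) + c ^ (n + 1) = b * b ^ n + c * c ^ n := by ring
      _ ≤ a * b ^ n + a * c ^ n := by
          exact Nat.add_le_add (Nat.mul_le_mul_right _ hb) (Nat.mul_le_mul_right _ hc)
      _ = a * (b ^ n + c ^ n) := by ring
      _ < a * a ^ n := by exact mul_lt_mul_of_pos_left ih ha
      _ = a ^ (n + 1) := by ring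

lemma hf_key (n : ℕ) (hn : 3 ≤ n) (a b c : ℕ)
    (ha1 : 1 ≤ a) (ha5 : a ≤ 5) (hb1 : 1 ≤ b) (hb5 : b ≤ 5) (hc1 : 1 ≤ c) (hc5 : c ≤ 5) :
    a ^ n ≠ b ^ n + c ^ n := by
  intro heq
  rcases le_or_gt a b with hab | hab
  · have k1 := Nat.pow_le_pow_left hab n
    have k2 := Nat.one_le_pow n c hc1
    omega
  rcases le_or_gt a c with hac | hac
  · have k1 := Nat.pow_le_pow_left hac n
    have k2 := Nat.one_le_pow n b hb1
    omega
  rcases Nat.lt_or_ge n 4 with h4 | h4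
  · interval_cases n
    interval_cases a <;> interval_cases b <;> interval_cases c <;> revert heq <;> decide
  · have hbase : b ^ 4 + c ^ 4 < a ^ 4 := by
      interval_cases a <;> interval_cases b <;> interval_cases c <;> decide
    have := hf_grow a b c 4 (by omega) (le_of_lt hab) (le_of_lt hac) hbase n h4
    omega

lemma hf_keyZ (n : ℕ) (hn : 3 ≤ n) (a b c : ℕ)
    (ha1 : 1 ≤ a) (ha5 : a ≤ 5) (hb1 : 1 ≤ b) (hb5 : b ≤ 5) (hc1 : 1 ≤ c) (hc5 : c ≤ 5)
    (h : (a : ℤ) ^ n = (b : ℤ) ^ n + (c : ℤ) ^ n) : False := by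
  exact hf_key n hn a b c ha1 ha5 hb1 hb5 hc1 hc5 (by exact_mod_cast h)

lemma hf_abs_pow_decomp (m : ℤ) (n : ℕ) :
    ∃ d : ℤ, (d = 1 ∨ d = -1) ∧ m ^ n = d * ((m.natAbs : ℤ)) ^ n := by
  rcases Int.natAbs_eq m with h | h
  · exact ⟨1, Or.inl rfl, by rw [one_mul, ← h]⟩
  · have hm : m ^ n = (-1 : ℤ) ^ n * (m.natAbs : ℤ) ^ n := by
      conv_lhs => rw [h]
      rw [neg_pow]
    rcases neg_one_pow_eq_or ℤ n with hp | hp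
    · exact ⟨1, Or.inl rfl, by rw [hm, hp]⟩
    · exact ⟨-1, Or.inr rfl, by rw [hm, hp]⟩

lemma hf_sign_cases (t : ℚ) : halfIntSign t = 1 ∨ halfIntSign t = -1 := by
  unfold halfIntSign
  split <;> simp

lemma hf_final (n : ℕ) (hn : 3 ≤ n) (a1 a2 a3 : ℕ)
    (ha1l : 1 ≤ a1) (ha1u : a1 ≤ 5) (ha2l : 1 ≤ a2) (ha2u : a2 ≤ 5)
    (ha3l : 1 ≤ a3) (ha3u : a3 ≤ 5) (f1 f2 f3 : ℤ)
    (hf1 : f1 = 1 ∨ f1 = -1) (hf2 : f2 = 1 ∨ f2 = -1) (hf3 : f3 = 1 ∨ f3 = -1)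
    (heqF : f1 * (a1 : ℤ) ^ n = f2 * (a2 : ℤ) ^ n + f3 * (a3 : ℤ) ^ n) : False := by
  have hX : (1 : ℤ) ≤ (a1 : ℤ) ^ n := one_le_pow₀ (by exact_mod_cast ha1l)
  have hY : (1 : ℤ) ≤ (a2 : ℤ) ^ n := one_le_pow₀ (by exact_mod_cast ha2l)
  have hZ : (1 : ℤ) ≤ (a3 : ℤ) ^ n := one_le_pow₀ (by exact_mod_cast ha3l)
  rcases hf1 with rfl | rfl <;> rcases hf2 with rfl | rfl <;> rcases hf3 with rfl | rfl <;>
    first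
      | exact hf_keyZ n hn a1 a2 a3 ha1l ha1u ha2l ha2u ha3l ha3u (by linarith)
      | exact hf_keyZ n hn a2 a1 a3 ha2l ha2u ha1l ha1u ha3l ha3u (by linarith)
      | exact hf_keyZ n hn a3 a1 a2 ha3l ha3u ha1l ha1u ha2l ha2u (by linarith)
      | linarith

theorem halfinteger_fermat_solutions_are_large
    (n : ℕ) (hn : 3 ≤ n) (t1 t2 t3 : ℚ)
    (h1 : IsHalfInteger t1) (h2 : IsHalfInteger t2) (h3 : IsHalfInteger t3)
    (hne : t1 * t2 * t3 ≠ 0)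
    (heq : halfIntSign t1 * t1 ^ n = halfIntSign t2 * t2 ^ n + halfIntSign t3 * t3 ^ n) :
    3 ≤ max |t1| (max |t2| |t3|) := by
  by_contra hlt
  push_neg at hlt
  have h3t1 : |t1| < 3 := lt_of_le_of_lt (le_max_left _ _) hlt
  have h3t2 : |t2| < 3 :=
    lt_of_le_of_lt (le_trans (le_max_left _ _) (le_max_right _ _)) hlt
  have h3t3 : |t3| < 3 :=
    lt_of_le_of_lt (le_trans (le_max_right _ _) (le_max_right _ _)) hlt
  obtain ⟨m1, hm1⟩ := h1
  obtain ⟨m2, hm2⟩ := h2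
  obtain ⟨m3, hm3⟩ := h3
  have ht1 : t1 ≠ 0 := fun h => hne (by simp [h])
  have ht2 : t2 ≠ 0 := fun h => hne (by simp [h])
  have ht3 : t3 ≠ 0 := fun h => hne (by simp [h])
  have hm1ne : m1 ≠ 0 := by
    intro h; apply ht1; rw [h] at hm1; simpa using hm1.symm
  have hm2ne : m2 ≠ 0 := by
    intro h; apply ht2; rw [h] at hm2; simpa using hm2.symm
  have hm3ne : m3 ≠ 0 := by
    intro h; apply ht3; rw [h] at hm3; simpa using hm3.symm
  have habs1 : |m1| < 6 := by
    have hq : |(m1 : ℚ)| < 6 := by rw [hm1, abs_mul]; rw [abs_two]; linarith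
    rw [← Int.cast_abs] at hq
    exact_mod_cast hq
  have habs2 : |m2| < 6 := by
    have hq : |(m2 : ℚ)| < 6 := by rw [hm2, abs_mul]; rw [abs_two]; linarith
    rw [← Int.cast_abs] at hq
    exact_mod_cast hq
  have habs3 : |m3| < 6 := by
    have hq : |(m3 : ℚ)| < 6 := by rw [hm3, abs_mul]; rw [abs_two]; linarith
    rw [← Int.cast_abs] at hq
    exact_mod_cast hq
  rw [Int.abs_eq_natAbs] at habs1 habs2 habs3
  set a1 := m1.natAbs with ha1def
  set a2 := m2.natAbs with ha2def
  set a3 := m3.natAbs with ha3def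
  have ha1l : 1 ≤ a1 := Int.natAbs_pos.mpr hm1ne
  have ha2l : 1 ≤ a2 := Int.natAbs_pos.mpr hm2ne
  have ha3l : 1 ≤ a3 := Int.natAbs_pos.mpr hm3ne
  have ha1u : a1 ≤ 5 := by omega
  have ha2u : a2 ≤ 5 := by omega
  have ha3u : a3 ≤ 5 := by omega
  -- scaled equation over ℚ
  have heq2 : halfIntSign t1 * (m1 : ℚ) ^ n
      = halfIntSign t2 * (m2 : ℚ) ^ n + halfIntSign t3 * (m3 : ℚ) ^ n := by
    rw [hm1, hm2, hm3]
    simp only [mul_pow]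
    linear_combination (2 : ℚ) ^ n * heq
  -- extract integer signs
  have hE1 : ∃ e : ℤ, (e = 1 ∨ e = -1) ∧ ((e : ℚ)) = halfIntSign t1 := by
    rcases hf_sign_cases t1 with h | h
    exacts [⟨1, Or.inl rfl, by rw [h]; norm_num⟩, ⟨-1, Or.inr rfl, by rw [h]; push_cast; ring⟩]
  have hE2 : ∃ e : ℤ, (e = 1 ∨ e = -1) ∧ ((e : ℚ)) = halfIntSign t2 := by
    rcases hf_sign_cases t2 with h | h
    exacts [⟨1, Or.inl rfl, by rw [h]; norm_num⟩, ⟨-1, Or.inr rfl, by rw [h]; push_cast; ring⟩]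
  have hE3 : ∃ e : ℤ, (e = 1 ∨ e = -1) ∧ ((e : ℚ)) = halfIntSign t3 := by
    rcases hf_sign_cases t3 with h | h
    exacts [⟨1, Or.inl rfl, by rw [h]; norm_num⟩, ⟨-1, Or.inr rfl, by rw [h]; push_cast; ring⟩]
  obtain ⟨e1, he1, he1'⟩ := hE1
  obtain ⟨e2, he2, he2'⟩ := hE2
  obtain ⟨e3, he3, he3'⟩ := hE3
  have heqZ : e1 * m1 ^ n = e2 * m2 ^ n + e3 * m3 ^ n := by
    rw [← he1', ← he2', ← he3'] at heq2
    exact_mod_cast heq2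
  obtain ⟨d1, hd1, hd1'⟩ := hf_abs_pow_decomp m1 n
  obtain ⟨d2, hd2, hd2'⟩ := hf_abs_pow_decomp m2 n
  obtain ⟨d3, hd3, hd3'⟩ := hf_abs_pow_decomp m3 n
  rw [hd1', hd2', hd3'] at heqZ
  have hf1 : e1 * d1 = 1 ∨ e1 * d1 = -1 := by
    rcases he1 with rfl | rfl <;> rcases hd1 with rfl | rfl <;> norm_num
  have hf2 : e2 * d2 = 1 ∨ e2 * d2 = -1 := by
    rcases he2 with rfl | rfl <;> rcases hd2 with rfl | rfl <;> norm_num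
  have hf3 : e3 * d3 = 1 ∨ e3 * d3 = -1 := by
    rcases he3 with rfl | rfl <;> rcases hd3 with rfl | rfl <;> norm_num
  have heqF : (e1 * d1) * (a1 : ℤ) ^ n
      = (e2 * d2) * (a2 : ℤ) ^ n + (e3 * d3) * (a3 : ℤ) ^ n := by
    linear_combination heqZ
  exact hf_final n hn a1 a2 a3 ha1l ha1u ha2l ha2u ha3l ha3u _ _ _ hf1 hf2 hf3 heqF
end
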